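/- Let a = (1 + √−15)/2 ∈ ℂ. Then 3·D((a+3)/4) + 2·D(a−1) + 2·D(a+1) + 4·D(a/2) = 3·D(a) + 4·D((a+1)/2) + 2·D(a+1) + 2·D(a−1), where D is the Bloch–Wigner dilogarithm; that is, the element ξ = 3[(a+3)/4] + 2[a−1] + 2[a+1] + 4[a/2] and Gangl's element δ = 3[a] + 4[(a+1)/2] + 2[a+1] + 2[a−1] have the same value under D. -/

import Mathlib

open scoped Real

/-- The dilogarithm `Li₂`, the analytic continuation of `∑_{n ≥ 1} zⁿ / n²`
(which is given for `|z| ≤ 1`), via the classical integral formula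
`Li₂(z) = -∫₀¹ log(1 - z t) / t dt` (principal branch). -/
noncomputable def Li2 (z : ℂ) : ℂ :=
  -∫ t in (0:ℝ)..1, Complex.log (1 - z * t) / t

/-- The Bloch–Wigner dilogarithm `D(z) = Im(Li₂(z)) + arg(1 - z) · log |z|`. -/
noncomputable def blochWigner (z : ℂ) : ℝ :=
  (Li2 z).im + (1 - z).arg * Real.log ‖z‖

/-!
Only the terms `(a+3)/4` and `a/2` differ between the two sides. Since `a² - a + 4 = 0`,
`1 - (a+3)/4 = a⁻¹` and `conj (1 - a/2) = (a+1)/2`, so the identity follows from three symmetries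
of `D`: reflection `D(z) + D(1-z) = 0`, inversion `D(z) + D(1/z) = 0` and `D(z̄) = -D(z)`.
Reflection and inversion are the imaginary parts of Euler's identities
`Li₂(z) + Li₂(1-z) + log z · log(1-z) = const` and `Li₂(z) + Li₂(1/z) + log²(-z)/2 = const`.
Their left-hand sides have zero derivative, by `Li₂'(z) = -log(1-z)/z` (differentiation under the
integral sign), on the domains `ℂ ∖ ((-∞,0] ∪ [1,∞))` and `ℂ ∖ [0,∞)`, which are star-convex about
`1/2` and `-1`, where the values are real.
-/

open Complex ComplexConjugate Set Metric Filter MeasureTheory intervalIntegral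

lemma one_sub_mul_ofReal_mem_slitPlane {z : ℂ} (hz : 1 - z ∈ slitPlane) {t : ℝ}
    (ht : t ∈ Icc (0 : ℝ) 1) : 1 - z * t ∈ slitPlane := by
  convert starConvex_one_slitPlane.add_smul_sub_mem hz ht.1 ht.2 using 1
  simp only [real_smul]
  ring

lemma one_sub_mem_slitPlane_of_neg_mem {z : ℂ} (hz : -z ∈ slitPlane) : 1 - z ∈ slitPlane := by
  rw [mem_slitPlane_iff] at hz ⊢
  simp only [neg_re, neg_im, sub_re, sub_im, one_re, one_im] at hz ⊢
  rcases hz with h | h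
  · exact Or.inl (by linarith)
  · exact Or.inr (by simpa using h)

lemma inv_mem_slitPlane {z : ℂ} (hz : z ∈ slitPlane) : z⁻¹ ∈ slitPlane := by
  rw [mem_slitPlane_iff_arg] at hz ⊢
  rw [arg_inv, if_neg hz.1]
  exact ⟨fun h ↦ (neg_pi_lt_arg z).ne' (by linarith), inv_ne_zero hz.2⟩

lemma log_one_sub_inv {z : ℂ} (hz : -z ∈ slitPlane) :
    log (1 - z⁻¹) = log (1 - z) - log (-z) := by
  have hz' := one_sub_mem_slitPlane_of_neg_mem hz
  have harg_lt {w : ℂ} (hw : w ∈ slitPlane) : w.arg < π :=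
    (arg_le_pi w).lt_of_ne (slitPlane_arg_ne_pi hw)
  -- `1 - z` and `-z` have the same imaginary part, so their arguments have the same sign
  have him : -π < (log (1 - z) - log (-z)).im ∧ (log (1 - z) - log (-z)).im ≤ π := by
    simp only [sub_im, log_im]
    have := neg_pi_lt_arg (1 - z); have := neg_pi_lt_arg (-z)
    have := harg_lt hz; have := harg_lt hz'
    rcases le_or_gt 0 (-z).im with h | h
    · have := arg_nonneg_iff.2 h
      have := arg_nonneg_iff.2 (show 0 ≤ (1 - z).im by simpa using h)
      constructor <;> linarith
    · have := arg_neg_iff.2 h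
      have := arg_neg_iff.2 (show (1 - z).im < 0 by simpa using h)
      constructor <;> linarith
  have hexp : exp (log (1 - z) - log (-z)) = 1 - z⁻¹ := by
    rw [exp_sub, exp_log (slitPlane_ne_zero hz'), exp_log (slitPlane_ne_zero hz)]
    have : z ≠ 0 := neg_ne_zero.1 (slitPlane_ne_zero hz)
    field_simp
    ring
  rw [← hexp, log_exp him.1 him.2]

lemma exists_ball_bound_inv_one_sub_mul {z₀ : ℂ} (hz₀ : 1 - z₀ ∈ slitPlane) :
    ∃ r > 0, ∃ C, ∀ x ∈ ball z₀ r, ∀ t ∈ Icc (0 : ℝ) 1,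
      1 - x * t ∈ slitPlane ∧ ‖(1 - x * t)⁻¹‖ ≤ C := by
  have hU : IsOpen {x : ℂ | 1 - x ∈ slitPlane} := isOpen_slitPlane.preimage (by fun_prop)
  obtain ⟨ε, hε, hball⟩ := Metric.isOpen_iff.1 hU z₀ hz₀
  have hmem : ∀ x ∈ closedBall z₀ (ε / 2), ∀ t ∈ Icc (0 : ℝ) 1, 1 - x * t ∈ slitPlane :=
    fun x hx t ht ↦ one_sub_mul_ofReal_mem_slitPlane
      (hball (closedBall_subset_ball (half_lt_self hε) hx)) ht
  have hK := (isCompact_closedBall z₀ (ε / 2)).prod (isCompact_Icc (a := (0 : ℝ)) (b := 1))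
  obtain ⟨C, hC⟩ := hK.exists_bound_of_continuousOn (f := fun p : ℂ × ℝ ↦ (1 - p.1 * p.2)⁻¹)
    (ContinuousOn.inv₀ (by fun_prop) fun p hp ↦ slitPlane_ne_zero (hmem p.1 hp.1 p.2 hp.2))
  exact ⟨ε / 2, half_pos hε, C, fun x hx t ht ↦
    ⟨hmem x (ball_subset_closedBall hx) t ht, hC (x, t) ⟨ball_subset_closedBall hx, ht⟩⟩⟩

lemma integral_inv_one_sub_mul {z : ℂ} (hz : 1 - z ∈ slitPlane) (h0 : z ≠ 0) :
    ∫ t in (0 : ℝ)..1, (1 - z * t)⁻¹ = -(log (1 - z) / z) := by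
  have h := log_inv_eq_integral hz
  rw [log_inv _ (slitPlane_arg_ne_pi hz)] at h
  simp only [real_smul, mul_comm _ z] at h
  rw [← neg_div, eq_div_iff h0, h, mul_comm]

/-- Via `log (1 - z t) / t = -z ∫₀¹ (1 - s t z)⁻¹ ds`. -/
lemma norm_log_one_sub_mul_div_le {z : ℂ} {C : ℝ}
    (hC : ∀ t ∈ Icc (0 : ℝ) 1, 1 - z * t ∈ slitPlane ∧ ‖(1 - z * t)⁻¹‖ ≤ C)
    {t : ℝ} (ht : t ∈ Ioc (0 : ℝ) 1) : ‖log (1 - z * t) / t‖ ≤ ‖z‖ * C := by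
  have ht' : t ∈ Icc (0 : ℝ) 1 := Ioc_subset_Icc_self ht
  have hslit := (hC t ht').1
  have hrep := log_inv_eq_integral hslit
  rw [log_inv _ (slitPlane_arg_ne_pi hslit)] at hrep
  have ht0 : (t : ℂ) ≠ 0 := ofReal_ne_zero.2 ht.1.ne'
  have heq : log (1 - z * t) / t = -z * ∫ s in (0 : ℝ)..1, (1 - z * ↑(s * t))⁻¹ := by
    rw [div_eq_iff ht0, neg_eq_iff_eq_neg.1 hrep]
    simp only [real_smul, ofReal_mul]
    ring_nf
  have hbound : ‖∫ s in (0 : ℝ)..1, (1 - z * ↑(s * t))⁻¹‖ ≤ C * |1 - 0| :=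
    norm_integral_le_of_norm_le_const fun s hs ↦ by
      rw [uIoc_of_le zero_le_one] at hs
      exact (hC (s * t) ⟨by nlinarith [hs.1, ht.1], by nlinarith [hs.2, ht.2, hs.1, ht.1]⟩).2
  rw [heq, norm_mul, norm_neg]
  simpa using mul_le_mul_of_nonneg_left hbound (norm_nonneg z)

lemma measurable_log_one_sub_mul_div (z : ℂ) :
    Measurable fun t : ℝ ↦ log (1 - z * t) / t :=
  (measurable_log.comp (by fun_prop)).div measurable_ofReal

lemma intervalIntegrable_log_one_sub_mul_div {z : ℂ} (hz : 1 - z ∈ slitPlane) :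
    IntervalIntegrable (fun t : ℝ ↦ log (1 - z * t) / t) volume 0 1 := by
  obtain ⟨r, hr, C, hC⟩ := exists_ball_bound_inv_one_sub_mul hz
  rw [intervalIntegrable_iff_integrableOn_Ioc_of_le zero_le_one]
  refine Measure.integrableOn_of_bounded (M := ‖z‖ * C) (by simp)
    (measurable_log_one_sub_mul_div z).aestronglyMeasurable
    ((ae_restrict_iff' measurableSet_Ioc).2 (ae_of_all _ fun t ht ↦ ?_))
  exact norm_log_one_sub_mul_div_le (hC z (mem_ball_self hr)) ht

lemma hasDerivAt_log_one_sub_mul_div {x : ℂ} {t : ℝ} (ht : t ≠ 0)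
    (h : 1 - x * t ∈ slitPlane) :
    HasDerivAt (fun x : ℂ ↦ log (1 - x * t) / t) (-(1 - x * t)⁻¹) x := by
  have hinner : HasDerivAt (fun x : ℂ ↦ 1 - x * t) (-t) x := by
    simpa using ((hasDerivAt_id x).mul_const (t : ℂ)).const_sub 1
  refine (((hasDerivAt_log h).comp x hinner).div_const (t : ℂ)).congr_deriv ?_
  rw [mul_neg, neg_div, mul_div_assoc, div_self (ofReal_ne_zero.2 ht), mul_one]

theorem hasDerivAt_Li2 {z : ℂ} (hz : 1 - z ∈ slitPlane) (h0 : z ≠ 0) :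
    HasDerivAt Li2 (-(log (1 - z) / z)) z := by
  obtain ⟨r, hr, C, hC⟩ := exists_ball_bound_inv_one_sub_mul hz
  have hIoc : ∀ {t : ℝ}, t ∈ uIoc (0 : ℝ) 1 → t ∈ Ioc (0 : ℝ) 1 := fun ht ↦ by
    rwa [uIoc_of_le zero_le_one] at ht
  have hderiv := hasDerivAt_integral_of_dominated_loc_of_deriv_le
    (F := fun x t ↦ log (1 - x * t) / t) (F' := fun x t ↦ -(1 - x * t)⁻¹)
    (bound := fun _ ↦ C) (ball_mem_nhds z hr)
    (Eventually.of_forall fun x ↦ (measurable_log_one_sub_mul_div x).aestronglyMeasurable)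
    (intervalIntegrable_log_one_sub_mul_div hz) (by measurability)
    (ae_of_all _ fun t ht x hx ↦ by
      simpa only [norm_neg] using (hC x hx t (Ioc_subset_Icc_self (hIoc ht))).2)
    intervalIntegrable_const
    (ae_of_all _ fun t ht x hx ↦ hasDerivAt_log_one_sub_mul_div (hIoc ht).1.ne'
      (hC x hx t (Ioc_subset_Icc_self (hIoc ht))).1)
  have hint : ∫ t in (0 : ℝ)..1, -(1 - z * t)⁻¹ = log (1 - z) / z := by
    rw [intervalIntegral.integral_neg, integral_inv_one_sub_mul hz h0, neg_neg]
  rw [← hint]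
  exact hderiv.2.neg

lemma Li2_conj {z : ℂ} (hz : 1 - z ∈ slitPlane) : Li2 (conj z) = conj (Li2 z) := by
  have hintegrand : ∀ t ∈ uIcc (0 : ℝ) 1,
      log (1 - conj z * t) / t = conj (log (1 - z * t) / t) := fun t ht ↦ by
    rw [uIcc_of_le zero_le_one] at ht
    rw [map_div₀, conj_ofReal, ← log_conj _ (slitPlane_arg_ne_pi
      (one_sub_mul_ofReal_mem_slitPlane hz ht))]
    simp
  rw [Li2, Li2, integral_congr hintegrand, map_neg]
  simp only [intervalIntegral, integral_conj, map_sub]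

lemma Li2_ofReal_im {x : ℝ} (hx : x ≤ 1) : (Li2 x).im = 0 := by
  have hintegrand : ∀ t ∈ uIcc (0 : ℝ) 1,
      log (1 - x * t) / t = ((Real.log (1 - x * t) / t : ℝ) : ℂ) := fun t ht ↦ by
    rw [uIcc_of_le zero_le_one] at ht
    have : 0 ≤ 1 - x * t := by nlinarith [mul_nonneg ht.1 (sub_nonneg.2 hx), ht.2]
    push_cast [ofReal_log this]
    rfl
  rw [Li2, integral_congr hintegrand, intervalIntegral.integral_ofReal]
  simp

lemma eq_of_hasDerivAt_eq_zero_of_starConvex {𝕜 G : Type*} [RCLike 𝕜] [NormedAddCommGroup G]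
    [NormedSpace 𝕜 G] {f : 𝕜 → G} {s : Set 𝕜} {c z : 𝕜} (hs : IsOpen s)
    (hsc : StarConvex ℝ c s) (hc : c ∈ s) (hf : ∀ w ∈ s, HasDerivAt f 0 w) (hz : z ∈ s) :
    f z = f c :=
  hs.is_const_of_deriv_eq_zero (hsc.isPathConnected hc).isConnected.isPreconnected
    (fun w hw ↦ (hf w hw).differentiableAt.differentiableWithinAt) (fun w hw ↦ (hf w hw).deriv)
    hz hc

lemma starConvex_half_slitPlane_inter_one_sub :
    StarConvex ℝ (1 / 2 : ℂ) {z | z ∈ slitPlane ∧ 1 - z ∈ slitPlane} := by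
  have hhalf : StarConvex ℝ (1 / 2 : ℂ) slitPlane := by
    simpa using starConvex_ofReal_slitPlane (x := 1 / 2) (by norm_num)
  intro z hz a b ha hb hab
  have hab' : (a : ℂ) + b = 1 := by exact_mod_cast hab
  refine ⟨hhalf hz.1 ha hb hab, ?_⟩
  convert hhalf hz.2 ha hb hab using 1
  simp only [real_smul]
  linear_combination (-1 : ℂ) * hab'

theorem Li2_add_Li2_one_sub_add_log_mul_log {z : ℂ} (hz : z ∈ slitPlane)
    (hz' : 1 - z ∈ slitPlane) :
    Li2 z + Li2 (1 - z) + log z * log (1 - z) =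
      2 * Li2 (1 / 2) + log (1 / 2) ^ 2 := by
  have hderiv : ∀ w ∈ {w | w ∈ slitPlane ∧ 1 - w ∈ slitPlane},
      HasDerivAt (fun w ↦ Li2 w + Li2 (1 - w) + log w * log (1 - w)) 0 w := by
    rintro w ⟨hw, hw'⟩
    have hsub : HasDerivAt (fun w : ℂ ↦ 1 - w) (-1) w := by
      simpa using (hasDerivAt_id w).const_sub 1
    have h1 := hasDerivAt_Li2 hw' (slitPlane_ne_zero hw)
    have h2 := (hasDerivAt_Li2 (by rwa [sub_sub_cancel]) (slitPlane_ne_zero hw')).comp w hsub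
    have h3 := (hasDerivAt_log hw).mul ((hasDerivAt_log hw').comp w hsub)
    rw [sub_sub_cancel] at h2
    refine ((h1.add h2).add h3).congr_deriv ?_
    simp only [Function.comp_apply]
    field_simp [slitPlane_ne_zero hw, slitPlane_ne_zero hw']
    ring
  have hhalf : (1 / 2 : ℂ) ∈ slitPlane := by
    simpa using ofReal_mem_slitPlane.2 (by norm_num : (0 : ℝ) < 1 / 2)
  have hsub_half : (1 : ℂ) - 1 / 2 = 1 / 2 := by norm_num
  have h := eq_of_hasDerivAt_eq_zero_of_starConvex
    (isOpen_slitPlane.inter (isOpen_slitPlane.preimage (by fun_prop)))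
    starConvex_half_slitPlane_inter_one_sub
    ⟨hhalf, show (1 : ℂ) - 1 / 2 ∈ slitPlane by rwa [hsub_half]⟩ hderiv ⟨hz, hz'⟩
  rw [h, hsub_half]
  ring

theorem Li2_add_Li2_inv_add_log_sq {z : ℂ} (hz : -z ∈ slitPlane) :
    Li2 z + Li2 z⁻¹ + log (-z) ^ 2 / 2 = 2 * Li2 (-1) := by
  have hderiv : ∀ w ∈ -slitPlane,
      HasDerivAt (fun w ↦ Li2 w + Li2 w⁻¹ + log (-w) ^ 2 / 2) 0 w := by
    intro w hw
    rw [Set.mem_neg] at hw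
    have hw0 : w ≠ 0 := neg_ne_zero.1 (slitPlane_ne_zero hw)
    have hinv : 1 - w⁻¹ ∈ slitPlane :=
      one_sub_mem_slitPlane_of_neg_mem (by simpa using inv_mem_slitPlane hw)
    have h1 := hasDerivAt_Li2 (one_sub_mem_slitPlane_of_neg_mem hw) hw0
    have h2 := (hasDerivAt_Li2 hinv (inv_ne_zero hw0)).comp w (hasDerivAt_inv hw0)
    have h3 := (((hasDerivAt_log hw).comp w (hasDerivAt_neg w)).pow 2).div_const 2
    refine ((h1.add h2).add h3).congr_deriv ?_
    simp only [Function.comp_apply, log_one_sub_inv hw]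
    field_simp
    ring
  have h := eq_of_hasDerivAt_eq_zero_of_starConvex isOpen_slitPlane.neg
    starConvex_one_slitPlane.neg (by simp) hderiv (Set.mem_neg.2 hz)
  rw [h, inv_neg_one, neg_neg, log_one]
  ring

lemma blochWigner_add_blochWigner_one_sub {z : ℂ} (hz : z ∈ slitPlane)
    (hz' : 1 - z ∈ slitPlane) : blochWigner z + blochWigner (1 - z) = 0 := by
  have h := congrArg im (Li2_add_Li2_one_sub_add_log_mul_log hz hz')
  have hhalf : (Li2 (1 / 2)).im = 0 := by simpa using Li2_ofReal_im (x := 1 / 2) (by norm_num)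
  have hlog : log (1 / 2) = (Real.log (1 / 2) : ℂ) := by
    simpa using (ofReal_log (by norm_num : (0 : ℝ) ≤ 1 / 2)).symm
  simp only [hlog, ← ofReal_pow, add_im, mul_im, log_re, log_im, ofReal_im, hhalf, re_ofNat,
    im_ofNat, mul_zero, zero_mul, add_zero] at h
  simp only [blochWigner, sub_sub_cancel]
  linarith

lemma blochWigner_add_blochWigner_inv {z : ℂ} (hz : -z ∈ slitPlane) :
    blochWigner z + blochWigner z⁻¹ = 0 := by
  have h := congrArg im (Li2_add_Li2_inv_add_log_sq hz)
  have hneg : (Li2 (-1)).im = 0 := by simpa using Li2_ofReal_im (x := -1) (by norm_num)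
  have harg : (1 - z⁻¹).arg = (1 - z).arg - (-z).arg := by
    simpa only [sub_im, log_im] using congrArg im (log_one_sub_inv hz)
  simp only [add_im, div_ofNat_im, pow_two, mul_im, log_re, log_im, norm_neg, hneg, re_ofNat,
    im_ofNat, mul_zero, zero_mul, add_zero] at h
  simp only [blochWigner, harg, norm_inv, Real.log_inv]
  linarith

lemma blochWigner_conj {z : ℂ} (hz : 1 - z ∈ slitPlane) :
    blochWigner (conj z) = -blochWigner z := by
  have h : 1 - conj z = conj (1 - z) := by simp
  rw [blochWigner, blochWigner, Li2_conj hz, h, arg_conj, if_neg (slitPlane_arg_ne_pi hz),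
    norm_conj, conj_im]
  ring

lemma blochWigner_one_sub_inv {z : ℂ} (hz : z.im ≠ 0) :
    blochWigner (1 - z⁻¹) = blochWigner z := by
  have hneg : -z ∈ slitPlane := mem_slitPlane_iff.2 (Or.inr (by simpa using hz))
  have h1 := blochWigner_add_blochWigner_one_sub
    (one_sub_mem_slitPlane_of_neg_mem (by rw [neg_inv]; exact inv_mem_slitPlane hneg))
    (by simpa using inv_mem_slitPlane (mem_slitPlane_iff.2 (Or.inr hz)))
  have h2 := blochWigner_add_blochWigner_inv hneg
  rw [sub_sub_cancel] at h1
  linarith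

lemma blochWigner_one_sub_conj {z : ℂ} (hz : z.im ≠ 0) :
    blochWigner (1 - conj z) = blochWigner z := by
  have hz' : 1 - z ∈ slitPlane := mem_slitPlane_iff.2 (Or.inr (by simpa using hz))
  have h1 := blochWigner_add_blochWigner_one_sub (mem_slitPlane_iff.2 (Or.inr hz)) hz'
  have h2 := blochWigner_conj (z := 1 - z) (by simpa using mem_slitPlane_iff.2 (Or.inr hz))
  rw [map_sub, map_one] at h2
  linarith

/-- With `a = (1 + √−15)/2` (square root with positive imaginary part), the elements
`ξ = 3[(a+3)/4] + 2[a−1] + 2[a+1] + 4[a/2]` and Gangl's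
`δ = 3[a] + 4[(a+1)/2] + 2[a+1] + 2[a−1]` have the same value under the Bloch–Wigner
dilogarithm `D` (extended by linearity). -/
theorem blochWigner_xi_eq_gangl_delta :
    let a : ℂ := (1 + Complex.I * Real.sqrt 15) / 2
    3 * blochWigner ((a + 3) / 4) + 2 * blochWigner (a - 1) + 2 * blochWigner (a + 1) +
        4 * blochWigner (a / 2) =
      3 * blochWigner a + 4 * blochWigner ((a + 1) / 2) + 2 * blochWigner (a + 1) +
        2 * blochWigner (a - 1) := by
  intro a
  have hsqrt : ((Real.sqrt 15 : ℝ) : ℂ) ^ 2 = 15 := by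
    exact_mod_cast Real.sq_sqrt (by norm_num : (0 : ℝ) ≤ 15)
  have ha_im : a.im ≠ 0 := by simp [a]
  have ha_conj : conj a = 1 - a := by
    simp only [a, map_div₀, map_add, map_one, map_mul, conj_I, conj_ofReal, map_ofNat]
    ring
  have ha_quad : a * (1 - a) = 4 := by
    simp only [a]
    linear_combination (-(Real.sqrt 15 : ℂ) ^ 2 / 4) * I_sq + (1 / 4 : ℂ) * hsqrt
  clear_value a
  have hxi : (a + 3) / 4 = 1 - a⁻¹ := by
    have hinv : 1 - (a + 3) / 4 = a⁻¹ :=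
      eq_inv_of_mul_eq_one_left (by linear_combination ha_quad / 4)
    rw [← hinv]
    ring
  have hdelta : (a + 1) / 2 = 1 - conj (a / 2) := by
    rw [map_div₀, ha_conj, map_ofNat]
    ring
  rw [hxi, hdelta, blochWigner_one_sub_inv ha_im, blochWigner_one_sub_conj (by simpa using ha_im)]
  ring
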